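/- Conversely, if D ∈ S^n satisfies diag(D) = 0 and −v^T D v ≥ 0 for all v with v^T e = 0, then there exist points w_1,…,w_n ∈ R^r with r = rank(JDJ), J = I − (1/n)ee^T, such that D_{ij} = ‖w_i − w_j‖² for all i,j (Schoenberg's theorem). -/

import Mathlib

/-!
Schoenberg's construction: the doubly centred matrix `G = -½ J D J` is the Gram matrix of the
points. Since `J` maps every vector to one with coordinate sum zero, the hypothesis on `D` makes
`G` positive semidefinite, and since `D` is symmetric with zero diagonal,
`D i j = G i i + G j j - 2 G i j`. Writing `G = Bᴴ B`, the columns of `B` expressed in an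
orthonormal basis of their span, whose dimension is `rank B = rank G = rank (J D J)`, are the
required points.
-/

open Matrix

namespace Matrix

section Gram
open scoped ComplexOrder

variable {ι 𝕜 : Type*} [RCLike 𝕜]

theorem exists_gram_eq_euclideanSpace {E : Type*} [NormedAddCommGroup E]
    [InnerProductSpace 𝕜 E] [Finite ι] (v : ι → E) :
    ∃ w : ι → EuclideanSpace 𝕜 (Fin (Module.finrank 𝕜 (Submodule.span 𝕜 (Set.range v)))),
      gram 𝕜 w = gram 𝕜 v := by
  have hv (i : ι) : v i ∈ Submodule.span 𝕜 (Set.range v) := Submodule.subset_span ⟨i, rfl⟩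
  have := FiniteDimensional.span_of_finite 𝕜 (Set.finite_range v)
  refine ⟨fun i => (stdOrthonormalBasis 𝕜 _).repr ⟨v i, hv i⟩, ?_⟩
  ext i j
  simp [gram_apply]

theorem gram_toLp_transpose {m : Type*} [Fintype m] (B : Matrix m ι 𝕜) :
    gram 𝕜 (fun i => WithLp.toLp 2 (Bᵀ i)) = Bᴴ * B := by
  ext i j
  simp [gram_apply, mul_apply, PiLp.inner_apply, mul_comm]

theorem finrank_span_range_toLp_transpose {m : Type*} [Fintype m] [Fintype ι]
    (B : Matrix m ι 𝕜) :
    Module.finrank 𝕜 (Submodule.span 𝕜 (Set.range fun i => WithLp.toLp 2 (Bᵀ i) :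
      Set (EuclideanSpace 𝕜 m))) = B.rank := by
  rw [rank_eq_finrank_span_cols, ← LinearEquiv.finrank_map_eq (WithLp.linearEquiv 2 𝕜 (m → 𝕜)),
    Submodule.map_span, ← Set.range_comp]
  rfl

theorem PosSemidef.exists_gram_eq [Fintype ι] {G : Matrix ι ι 𝕜} (hG : G.PosSemidef) :
    ∃ w : ι → EuclideanSpace 𝕜 (Fin G.rank), gram 𝕜 w = G := by
  classical
  obtain ⟨B, rfl⟩ : ∃ B : Matrix ι ι 𝕜, G = Bᴴ * B := by
    open scoped MatrixOrder Matrix.Norms.L2Operator in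
    exact CStarAlgebra.nonneg_iff_eq_star_mul_self.mp hG.nonneg
  rw [rank_conjTranspose_mul_self, ← finrank_span_range_toLp_transpose, ← gram_toLp_transpose]
  exact exists_gram_eq_euclideanSpace _

end Gram

section Centering

variable {ι : Type*} [Fintype ι] [DecidableEq ι]

variable (ι) in
noncomputable def centeringMatrix : Matrix ι ι ℝ := 1 - (Fintype.card ι : ℝ)⁻¹ • of fun _ _ => 1

theorem transpose_centeringMatrix : (centeringMatrix ι)ᵀ = centeringMatrix ι := by
  simp [centeringMatrix, transpose_sub]
  rfl

theorem centeringMatrix_mul_apply (A : Matrix ι ι ℝ) (i j : ι) :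
    (centeringMatrix ι * A) i j = A i j - (Fintype.card ι : ℝ)⁻¹ * ∑ k, A k j := by
  rw [centeringMatrix, Matrix.sub_mul, Matrix.one_mul, sub_apply]
  simp [mul_apply, Finset.mul_sum]

theorem mul_centeringMatrix_apply (A : Matrix ι ι ℝ) (i j : ι) :
    (A * centeringMatrix ι) i j = A i j - (Fintype.card ι : ℝ)⁻¹ * ∑ k, A i k := by
  rw [centeringMatrix, Matrix.mul_sub, Matrix.mul_one, sub_apply]
  simp [mul_apply, Finset.sum_mul, mul_comm]

theorem centeringMatrix_mulVec_apply (x : ι → ℝ) (i : ι) :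
    (centeringMatrix ι *ᵥ x) i = x i - (Fintype.card ι : ℝ)⁻¹ * ∑ j, x j := by
  rw [centeringMatrix, sub_mulVec, one_mulVec, Pi.sub_apply]
  simp [mulVec, dotProduct, Finset.mul_sum]

theorem sum_centeringMatrix_mulVec (x : ι → ℝ) : ∑ i, (centeringMatrix ι *ᵥ x) i = 0 := by
  simp only [centeringMatrix_mulVec_apply, Finset.sum_sub_distrib, Finset.sum_const,
    Finset.card_univ, nsmul_eq_mul]
  rcases isEmpty_or_nonempty ι with hι | hι
  · simp
  · rw [mul_inv_cancel_left₀ (by positivity), sub_self]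

theorem centeringMatrix_mul_mul_centeringMatrix_apply (D : Matrix ι ι ℝ) (i j : ι) :
    (centeringMatrix ι * D * centeringMatrix ι) i j =
      D i j - (Fintype.card ι : ℝ)⁻¹ * ∑ k, D i k - (Fintype.card ι : ℝ)⁻¹ * ∑ k, D k j +
        (Fintype.card ι : ℝ)⁻¹ ^ 2 * ∑ k, ∑ l, D k l := by
  simp only [mul_centeringMatrix_apply, centeringMatrix_mul_apply, Finset.sum_sub_distrib,
    ← Finset.mul_sum, Finset.sum_comm (γ := ι) (f := fun k l => D l k)]
  ring

theorem dotProduct_centeringMatrix_mul_mul_centeringMatrix_mulVec (D : Matrix ι ι ℝ)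
    (x : ι → ℝ) :
    x ⬝ᵥ (centeringMatrix ι * D * centeringMatrix ι) *ᵥ x =
      (centeringMatrix ι *ᵥ x) ⬝ᵥ D *ᵥ (centeringMatrix ι *ᵥ x) := by
  rw [← mulVec_mulVec, ← mulVec_mulVec, dotProduct_mulVec, ← mulVec_transpose,
    transpose_centeringMatrix]

noncomputable def centeredGram (D : Matrix ι ι ℝ) : Matrix ι ι ℝ :=
  (-(1 / 2) : ℝ) • (centeringMatrix ι * D * centeringMatrix ι)

theorem rank_centeredGram (D : Matrix ι ι ℝ) :
    (centeredGram D).rank = (centeringMatrix ι * D * centeringMatrix ι).rank :=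
  rank_smul_of_mem_nonZeroDivisors _ (mem_nonZeroDivisors_of_ne_zero (by norm_num))

theorem posSemidef_centeredGram {D : Matrix ι ι ℝ} (hD : D.IsSymm)
    (hK : ∀ v : ι → ℝ, ∑ i, v i = 0 → 0 ≤ -(v ⬝ᵥ D *ᵥ v)) : (centeredGram D).PosSemidef := by
  refine .of_dotProduct_mulVec_nonneg ?_ fun x => ?_
  · simp [centeredGram, IsHermitian, Matrix.mul_assoc, transpose_centeringMatrix, hD.eq]
  · have := hK _ (sum_centeringMatrix_mulVec x)
    rw [star_trivial, centeredGram, smul_mulVec, dotProduct_smul, smul_eq_mul,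
      dotProduct_centeringMatrix_mul_mul_centeringMatrix_mulVec]
    linarith

theorem apply_eq_centeredGram {D : Matrix ι ι ℝ} (hD : D.IsSymm) (hdiag : ∀ i, D i i = 0)
    (i j : ι) : D i j = centeredGram D i i + centeredGram D j j - 2 * centeredGram D i j := by
  have hcol (a : ι) : ∑ k, D k a = ∑ k, D a k := Finset.sum_congr rfl fun k _ => hD.apply a k
  simp only [centeredGram, smul_apply, smul_eq_mul,
    centeringMatrix_mul_mul_centeringMatrix_apply, hdiag, hcol]
  ring

end Centering

end Matrix

/-- Schoenberg's theorem: if a symmetric matrix `D` has zero diagonal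
and `-vᵀ D v ≥ 0` for all `v` with `vᵀ e = 0`, then `D` is the EDM of points in
`ℝ^r` with `r = rank (J D J)`, `J = I - (1/n) e eᵀ`. -/
theorem schoenberg (n : ℕ) (D : Matrix (Fin n) (Fin n) ℝ)
    (hsymm : D.IsSymm)
    (hdiag : ∀ i, D i i = 0)
    (hK : ∀ v : Fin n → ℝ, (∑ i, v i) = 0 → 0 ≤ -(v ⬝ᵥ D *ᵥ v)) :
    ∃ w : Fin n →
        EuclideanSpace ℝ
          (Fin (((1 - (n : ℝ)⁻¹ • (Matrix.of fun _ _ => (1 : ℝ))) * D *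
              (1 - (n : ℝ)⁻¹ • (Matrix.of fun _ _ => (1 : ℝ)))).rank)),
      ∀ i j, D i j = ‖w i - w j‖ ^ 2 := by
  have hJ : 1 - (n : ℝ)⁻¹ • (of fun _ _ => (1 : ℝ)) = centeringMatrix (Fin n) := by
    simp [centeringMatrix]
  rw [hJ, ← rank_centeredGram]
  obtain ⟨w, hw⟩ := (posSemidef_centeredGram hsymm hK).exists_gram_eq
  refine ⟨w, fun i j => ?_⟩
  rw [apply_eq_centeredGram hsymm hdiag, norm_sub_sq_real, ← real_inner_self_eq_norm_sq,
    ← real_inner_self_eq_norm_sq, ← gram_apply, ← gram_apply, ← gram_apply, hw]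
  ring
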